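/- Euler's identity holds: for |z| < 1 and |q| < 1, ∑_{k=0}^{∞} z^k / (q;q)_k = 1/(z;q)_∞. -/

import Mathlib

open Finset Complex

noncomputable def qPoch (a q : ℂ) (n : ℕ) : ℂ :=
  ∏ j ∈ Finset.range n, (1 - a * q ^ j)

noncomputable def qBinom (q : ℂ) (n k : ℕ) : ℂ :=
  qPoch q q n / (qPoch q q k * qPoch q q (n - k))

noncomputable def cauchyP (q x y : ℂ) (n : ℕ) : ℂ :=
  ∏ j ∈ Finset.range n, (x - q ^ j * y)

noncomputable def Fpoly (q x y z : ℂ) (n : ℕ) : ℂ :=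
  (-1) ^ n * q ^ (-((n * (n - 1) / 2 : ℕ) : ℤ)) *
    ∑ k ∈ Finset.range (n + 1),
      qBinom q n k * (-1) ^ k * q ^ (k * (k - 1) / 2) * cauchyP q y x (n - k) * z ^ k

noncomputable def Pq (q ξ y ζ z : ℂ) (n : ℕ) : ℂ :=
  ∑ k ∈ Finset.range (n + 1),
    qBinom q n k * q ^ (k * (k - 1) / 2) * cauchyP q ξ y (n - k) * (-1) ^ k * cauchyP q ζ z k

noncomputable def psiH (q a x y : ℂ) (n : ℕ) : ℂ := Fpoly q x (a * x) y n

noncomputable def qExp (q z : ℂ) : ℂ := ∑' k : ℕ, z ^ k / qPoch q q k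

noncomputable def qExpE (q z : ℂ) : ℂ := ∑' k : ℕ, q ^ (k * (k - 1) / 2) * z ^ k / qPoch q q k

noncomputable def thetaOp (q : ℂ) (g : ℂ → ℂ → ℂ) : ℂ → ℂ → ℂ :=
  fun x y => (g (q⁻¹ * x) y - g x (q * y)) / (q⁻¹ * x - y)

/-! Write `F w = ∑ w ^ k / (q;q)_k`. Comparing coefficients gives `(1 - w) F(w) = F(q w)`;
iterating, `F(z) ∏_{j<n} (1 - z q ^ j) = F(q ^ n z)`, and as `n → ∞` the left side tends to
`F(z) (z;q)_∞` while, by continuity of `F` at `0`, the right side tends to `F(0) = 1`. -/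

open Filter Topology

lemma one_sub_ne_zero_of_norm_lt_one {x : ℂ} (hx : ‖x‖ < 1) : 1 - x ≠ 0 := by
  rw [sub_ne_zero]
  rintro rfl
  simp at hx

lemma norm_mul_pow_lt_one {a q : ℂ} (ha : ‖a‖ < 1) (hq : ‖q‖ ≤ 1) (n : ℕ) :
    ‖a * q ^ n‖ < 1 := by
  rw [norm_mul, norm_pow]
  exact (mul_le_of_le_one_right (norm_nonneg a) (pow_le_one₀ (norm_nonneg q) hq)).trans_lt ha

lemma qPoch_succ (a q : ℂ) (n : ℕ) : qPoch a q (n + 1) = qPoch a q n * (1 - a * q ^ n) :=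
  prod_range_succ _ n

lemma qPoch_ne_zero {a q : ℂ} (ha : ‖a‖ < 1) (hq : ‖q‖ ≤ 1) (n : ℕ) : qPoch a q n ≠ 0 :=
  prod_ne_zero_iff.mpr fun j _ => one_sub_ne_zero_of_norm_lt_one (norm_mul_pow_lt_one ha hq j)

section qExp

variable {q w : ℂ}

lemma summable_pow_div_qPoch (hq : ‖q‖ < 1) (hw : ‖w‖ < 1) :
    Summable fun k => w ^ k / qPoch q q k := by
  obtain ⟨r, hwr, hr⟩ := exists_between hw
  have hfactor : Tendsto (fun n : ℕ => ‖1 - q * q ^ n‖) atTop (𝓝 1) := by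
    simpa using ((tendsto_pow_atTop_nhds_zero_of_norm_lt_one hq).const_mul q).const_sub 1 |>.norm
  have hratio : Tendsto (fun n : ℕ => ‖w‖ / ‖1 - q * q ^ n‖) atTop (𝓝 ‖w‖) := by
    simpa [div_eq_mul_inv] using (hfactor.inv₀ one_ne_zero).const_mul ‖w‖
  refine summable_of_ratio_norm_eventually_le hr ?_
  filter_upwards [hratio.eventually_le_const hwr] with n hn
  calc ‖w ^ (n + 1) / qPoch q q (n + 1)‖
      = ‖w‖ / ‖1 - q * q ^ n‖ * ‖w ^ n / qPoch q q n‖ := by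
        rw [qPoch_succ, norm_div, norm_div, norm_mul, norm_pow, norm_pow, pow_succ]
        ring
    _ ≤ r * ‖w ^ n / qPoch q q n‖ := by gcongr

/-- The coefficients of `qExp q w - qExp q (q * w)` are those of `w * qExp q w` shifted by one,
since `w ^ (k + 1) - (q * w) ^ (k + 1) = (1 - q ^ (k + 1)) * w ^ (k + 1)`. -/
lemma one_sub_mul_qExp (hq : ‖q‖ < 1) (hw : ‖w‖ < 1) :
    (1 - w) * qExp q w = qExp q (q * w) := by
  have hqw : ‖q * w‖ < 1 := by simpa [mul_comm] using norm_mul_pow_lt_one hw hq.le 1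
  have hS : HasSum _ (qExp q w) := (summable_pow_div_qPoch hq hw).hasSum
  have hT : HasSum _ (qExp q (q * w)) := (summable_pow_div_qPoch hq hqw).hasSum
  have hterm (k : ℕ) : w ^ (k + 1) / qPoch q q (k + 1) - (q * w) ^ (k + 1) / qPoch q q (k + 1)
      = w * (w ^ k / qPoch q q k) := by
    have hP := qPoch_ne_zero hq hq.le k
    have hc := one_sub_ne_zero_of_norm_lt_one (norm_mul_pow_lt_one hq hq.le k)
    rw [qPoch_succ]
    field_simp
    ring
  have hshift : HasSum (fun k => w ^ k / qPoch q q k - (q * w) ^ k / qPoch q q k)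
      (w * qExp q w) := by
    rw [← hasSum_nat_add_iff' 1]
    simp only [hterm, sum_range_one, pow_zero, sub_self, sub_zero]
    exact hS.mul_left w
  linear_combination (hS.sub hT).unique hshift

lemma qExp_mul_prod_one_sub (hq : ‖q‖ < 1) (hw : ‖w‖ < 1) (n : ℕ) :
    qExp q w * ∏ j ∈ range n, (1 - w * q ^ j) = qExp q (q ^ n * w) := by
  induction n with
  | zero => simp
  | succ n ih =>
    have hqw : ‖q ^ n * w‖ < 1 := by simpa [mul_comm] using norm_mul_pow_lt_one hw hq.le n
    rw [prod_range_succ, ← mul_assoc, ih, pow_succ', mul_assoc,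
      ← one_sub_mul_qExp hq hqw]
    ring

lemma qExp_zero (q : ℂ) : qExp q 0 = 1 := by
  rw [qExp, tsum_eq_single 0 fun k hk => by simp [hk]]
  simp [qPoch]

lemma tendsto_qExp_nhds_zero (hq : ‖q‖ < 1) : Tendsto (qExp q) (𝓝 0) (𝓝 1) := by
  have hbound := (summable_pow_div_qPoch (w := 1 / 2) hq (by norm_num)).norm
  have hsmall : Metric.closedBall (0 : ℂ) (1 / 2) ∈ 𝓝 0 :=
    Metric.closedBall_mem_nhds 0 (by norm_num)
  rw [← qExp_zero q]
  refine tendsto_tsum_of_dominated_convergence hbound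
    (fun k => ((continuous_pow k).div_const _).tendsto 0) ?_
  filter_upwards [hsmall] with v hv k
  rw [norm_div, norm_div, norm_pow, norm_pow]
  gcongr
  simpa using hv

end qExp

lemma multipliable_one_sub_mul_pow (z : ℂ) {q : ℂ} (hq : ‖q‖ < 1) :
    Multipliable fun j : ℕ => 1 - z * q ^ j := by
  simpa [sub_eq_add_neg] using multipliable_one_add_of_summable (f := fun j : ℕ => -(z * q ^ j))
    (by simpa using ((summable_geometric_of_norm_lt_one hq).mul_left z).norm)

theorem euler_identity (q z : ℂ) (hq : ‖q‖ < 1) (hz : ‖z‖ < 1) :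
    HasSum (fun k : ℕ => z ^ k / qPoch q q k)
      (1 / ∏' j : ℕ, (1 - z * q ^ j)) := by
  have hprod := (multipliable_one_sub_mul_pow z hq).hasProd.tendsto_prod_nat.const_mul (qExp q z)
  have hshifted : Tendsto (fun n : ℕ => qExp q (q ^ n * z)) atTop (𝓝 1) := by
    refine (tendsto_qExp_nhds_zero hq).comp ?_
    simpa using (tendsto_pow_atTop_nhds_zero_of_norm_lt_one hq).mul_const z
  simp_rw [← qExp_mul_prod_one_sub hq hz] at hshifted
  rw [← eq_one_div_of_mul_eq_one_left (tendsto_nhds_unique hprod hshifted)]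
  exact (summable_pow_div_qPoch hq hz).hasSum
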